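/- arXiv:2102.06635 — 3 statements merged into one kernel-verified Lean document; each statement's English description precedes it below -/
import Mathlib

section
/- Let n ≥ 3 and let x : (edges of complete graph Kₙ) → ℝ be edge weights. Define yₙ = min over i ∈ [n-1] of x(i,n), and for 1 ≤ i < j ≤ n-1 define x'(i,j) = min(x(i,j), x(i,n) + x(j,n) - yₙ). Then the minimum spanning tree value of Kₙ with weights x equals yₙ plus the minimum spanning tree value of Kₙ₋₁ with weights x'. -/
/-- `T` is (the edge set of) a spanning tree of the complete graph on `Fin n`:
the graph formed by its edges is a tree whose connectivity spans all vertices,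
and it contains no self-loops. -/
def IsSpanningTree {n : ℕ} (T : Finset (Sym2 (Fin n))) : Prop :=
  (SimpleGraph.fromEdgeSet (T : Set (Sym2 (Fin n)))).IsTree ∧ ∀ e ∈ T, ¬ e.IsDiag

/-- The total weight of an edge set `T`, where the weight of the edge
between `i < j` is `x i j`. -/
noncomputable def treeWeight {n : ℕ} (x : Fin n → Fin n → ℝ) (T : Finset (Sym2 (Fin n))) : ℝ :=
  ∑ p ∈ Finset.univ.filter (fun p : Fin n × Fin n => p.1 < p.2 ∧ s(p.1, p.2) ∈ T), x p.1 p.2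

/-- The value of a minimum spanning tree of the complete graph on `Fin n`
with edge weights `x`. -/
noncomputable def mstValue (n : ℕ) (x : Fin n → Fin n → ℝ) : ℝ :=
  sInf {w : ℝ | ∃ T : Finset (Sym2 (Fin n)), IsSpanningTree T ∧ w = treeWeight x T}

/-!
Let `i` minimise `x(·, n)`, so `y = x(i, n)`. Some minimum spanning tree contains the star edge
`s(i, n)`: exchanging the last edge of the tree path from `i` to `n` for it does not increase the
weight. Contracting that edge turns the other edges at `n` into edges at `i` of reduced weight at
most `x(j, n) + x(i, n) - y = x(j, n)`, which gives `mstValue n x ≥ y + mstValue (n-1) x'`.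
Conversely, a tree of `Kₙ₋₁` plus the star edge realises each edge `s(a, b)` whose reduced weight
is the detour `x(a, n) + x(b, n) - y` by swapping it for `s(a, n)` or `s(b, n)`, which costs at
most that much since `x(b, n) ≥ y`.
-/

open SimpleGraph Finset

namespace SimpleGraph

variable {V W : Type*} {G : SimpleGraph V} {H : SimpleGraph W}

lemma Reachable.of_adj_reachable (f : V → W) (h : ∀ a b, G.Adj a b → H.Reachable (f a) (f b))
    {u v : V} (huv : G.Reachable u v) : H.Reachable (f u) (f v) := by
  simp only [reachable_iff_reflTransGen] at h huv ⊢
  exact Relation.ReflTransGen.lift' f h u v huv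

lemma Connected.of_adj_reachable (f : V → W) (hf : Function.Surjective f) (hG : G.Connected)
    (h : ∀ a b, G.Adj a b → H.Reachable (f a) (f b)) : H.Connected := by
  obtain ⟨u⟩ := hG.nonempty
  refine (connected_iff_exists_forall_reachable H).mpr ⟨f u, fun w => ?_⟩
  obtain ⟨v, rfl⟩ := hf w
  exact (hG.preconnected u v).of_adj_reachable f h

lemma Reachable.deleteEdges_or {u a : V} (b : V) (h : G.Reachable u a) :
    (G.deleteEdges {s(a, b)}).Reachable u a ∨ (G.deleteEdges {s(a, b)}).Reachable u b := by
  rw [reachable_iff_reflTransGen] at h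
  induction h using Relation.ReflTransGen.head_induction_on with
  | refl => exact Or.inl .rfl
  | @head u d hud _ ih =>
    by_cases hab : s(u, d) = s(a, b)
    · rcases Sym2.eq_iff.mp hab with ⟨rfl, -⟩ | ⟨rfl, -⟩
      · exact Or.inl .rfl
      · exact Or.inr .rfl
    · have hud' : (G.deleteEdges {s(a, b)}).Adj u d := by simp [hud, hab]
      exact ih.imp hud'.reachable.trans hud'.reachable.trans

lemma Walk.exists_adj_reachable_deleteEdges {u v : V} (p : G.Walk u v) (huv : u ≠ v) :
    ∃ w, G.Adj w v ∧ (G.deleteEdges {s(w, v)}).Reachable u w := by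
  induction p with
  | nil => exact absurd rfl huv
  | @cons u d v hud p ih =>
    by_cases hdv : d = v
    · subst hdv
      exact ⟨u, hud, .rfl⟩
    obtain ⟨w, hwv, hdw⟩ := ih hdv
    by_cases huw : u = w
    · exact ⟨w, hwv, huw ▸ .rfl⟩
    have hud' : (G.deleteEdges {s(w, v)}).Adj u d := by
      simp only [deleteEdges_adj, hud, Set.mem_singleton_iff, Sym2.eq_iff, true_and]
      tauto
    exact ⟨w, hwv, hud'.reachable.trans hdw⟩

lemma fromEdgeSet_coe_erase [DecidableEq V] (T : Finset (Sym2 V)) (e : Sym2 V) :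
    fromEdgeSet (T.erase e : Set (Sym2 V)) =
      (fromEdgeSet (T : Set (Sym2 V))).deleteEdges {e} := by
  rw [coe_erase, fromEdgeSet_sdiff]
  rfl

lemma edgeSet_fromEdgeSet_of_not_isDiag {s : Set (Sym2 V)} (hs : ∀ e ∈ s, ¬ e.IsDiag) :
    (fromEdgeSet s).edgeSet = s := by
  rw [edgeSet_fromEdgeSet]
  exact sdiff_eq_left.mpr (Set.disjoint_left.mpr hs)

end SimpleGraph

section SpanningTree

variable {n : ℕ} {T : Finset (Sym2 (Fin n))}

lemma isSpanningTree_iff_of_not_isDiag (hd : ∀ e ∈ T, ¬ e.IsDiag) :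
    IsSpanningTree T ↔ (fromEdgeSet (T : Set (Sym2 (Fin n)))).Connected ∧ #T + 1 = n := by
  rw [IsSpanningTree, isTree_iff_connected_and_card, edgeSet_fromEdgeSet_of_not_isDiag hd,
    Nat.card_coe_set_eq, Set.ncard_coe_finset, Nat.card_eq_fintype_card, Fintype.card_fin]
  exact ⟨fun h => h.1, fun h => ⟨h, hd⟩⟩

lemma IsSpanningTree.card_add_one (hT : IsSpanningTree T) : #T + 1 = n :=
  ((isSpanningTree_iff_of_not_isDiag hT.2).mp hT).2

lemma IsSpanningTree.connected (hT : IsSpanningTree T) :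
    (fromEdgeSet (T : Set (Sym2 (Fin n)))).Connected :=
  hT.1.connected

lemma le_card_add_one_of_connected (hd : ∀ e ∈ T, ¬ e.IsDiag)
    (hc : (fromEdgeSet (T : Set (Sym2 (Fin n)))).Connected) : n ≤ #T + 1 := by
  simpa [edgeSet_fromEdgeSet_of_not_isDiag hd] using hc.card_vert_le_card_edgeSet_add_one

lemma isSpanningTree_of_connected_of_card_le (hd : ∀ e ∈ T, ¬ e.IsDiag)
    (hc : (fromEdgeSet (T : Set (Sym2 (Fin n)))).Connected) (hcard : #T + 1 ≤ n) :
    IsSpanningTree T :=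
  (isSpanningTree_iff_of_not_isDiag hd).mpr
    ⟨hc, hcard.antisymm (le_card_add_one_of_connected hd hc)⟩

lemma IsSpanningTree.exchange (hT : IsSpanningTree T) {a b : Fin n} (hab : s(a, b) ∈ T)
    {f : Sym2 (Fin n)} (hf : ¬ f.IsDiag)
    (hreach : (fromEdgeSet (↑(insert f (T.erase s(a, b))) : Set (Sym2 (Fin n)))).Reachable a b) :
    IsSpanningTree (insert f (T.erase s(a, b))) ∧ f ∉ T.erase s(a, b) := by
  have hd : ∀ e ∈ insert f (T.erase s(a, b)), ¬ e.IsDiag := by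
    simp only [mem_insert, mem_erase, forall_eq_or_imp]
    exact ⟨hf, fun e he => hT.2 e he.2⟩
  have hc : (fromEdgeSet (↑(insert f (T.erase s(a, b))) : Set (Sym2 (Fin n)))).Connected := by
    refine hT.connected.of_adj_reachable id Function.surjective_id fun c d hcd => ?_
    by_cases hcd' : s(c, d) = s(a, b)
    · rcases Sym2.eq_iff.mp hcd' with ⟨rfl, rfl⟩ | ⟨rfl, rfl⟩
      exacts [hreach, hreach.symm]
    · refine Adj.reachable ?_
      simp_all [fromEdgeSet_adj]
  have hlow := le_card_add_one_of_connected hd hc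
  have hcardT := hT.card_add_one
  have hcard_erase := card_erase_of_mem hab
  have hpos : 0 < #T := card_pos.mpr ⟨_, hab⟩
  by_cases hmem : f ∈ T.erase s(a, b)
  · rw [insert_eq_of_mem hmem] at hlow
    omega
  · refine ⟨isSpanningTree_of_connected_of_card_le hd hc ?_, hmem⟩
    rw [card_insert_of_notMem hmem]
    omega

lemma exists_isSpanningTree (hn : 0 < n) : ∃ T : Finset (Sym2 (Fin n)), IsSpanningTree T := by
  classical
  have : Nonempty (Fin n) := ⟨⟨0, hn⟩⟩
  obtain ⟨H, -, hH⟩ := (connected_top (V := Fin n)).exists_isTree_le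
  refine ⟨H.edgeFinset, ?_, fun e he => H.not_isDiag_of_mem_edgeSet (mem_edgeFinset.mp he)⟩
  rwa [coe_edgeFinset, fromEdgeSet_edgeSet]

end SpanningTree

section Weight

variable {n : ℕ}

noncomputable def edgeWeight (x : Fin n → Fin n → ℝ) : Sym2 (Fin n) → ℝ :=
  Sym2.lift ⟨fun i j => if i < j then x i j else x j i, fun i j => by
    rcases lt_trichotomy i j with h | rfl | h <;> simp [*, not_lt_of_gt]⟩

lemma edgeWeight_mk_of_lt (x : Fin n → Fin n → ℝ) {i j : Fin n} (h : i < j) :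
    edgeWeight x s(i, j) = x i j := by
  simp [edgeWeight, h]

lemma treeWeight_eq_sum_edgeWeight (x : Fin n → Fin n → ℝ) {T : Finset (Sym2 (Fin n))}
    (hd : ∀ e ∈ T, ¬ e.IsDiag) : treeWeight x T = ∑ e ∈ T, edgeWeight x e := by
  refine sum_bij (fun p _ => s(p.1, p.2)) (fun p hp => (mem_filter.mp hp).2.2) ?_ ?_ ?_
  · rintro ⟨a, b⟩ hp ⟨c, d⟩ hq h
    simp only [mem_filter, mem_univ, true_and] at hp hq
    rcases Sym2.eq_iff.mp h with ⟨rfl, rfl⟩ | ⟨rfl, rfl⟩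
    · rfl
    · exact absurd hp.1 (lt_asymm hq.1)
  · intro e he
    induction e using Sym2.ind with
    | _ a b =>
    rcases lt_or_gt_of_ne (fun h : a = b => hd _ he (Sym2.mk_isDiag_iff.mpr h)) with h | h
    · exact ⟨(a, b), by simp [h, he], rfl⟩
    · rw [Sym2.eq_swap] at he
      exact ⟨(b, a), by simp [h, he], Sym2.eq_swap⟩
  · intro p hp
    exact (edgeWeight_mk_of_lt x (mem_filter.mp hp).2.1).symm

lemma finite_spanningTree_weights (x : Fin n → Fin n → ℝ) :
    {w | ∃ T : Finset (Sym2 (Fin n)), IsSpanningTree T ∧ w = treeWeight x T}.Finite :=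
  (Set.finite_range (treeWeight x)).subset (by rintro _ ⟨T, -, rfl⟩; exact ⟨T, rfl⟩)

lemma mstValue_le (x : Fin n → Fin n → ℝ) {T : Finset (Sym2 (Fin n))} (hT : IsSpanningTree T) :
    mstValue n x ≤ treeWeight x T :=
  csInf_le (finite_spanningTree_weights x).bddBelow ⟨T, hT, rfl⟩

lemma exists_isSpanningTree_treeWeight_eq_mstValue (hn : 0 < n) (x : Fin n → Fin n → ℝ) :
    ∃ T : Finset (Sym2 (Fin n)), IsSpanningTree T ∧ treeWeight x T = mstValue n x := by
  obtain ⟨T₀, hT₀⟩ := exists_isSpanningTree hn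
  have hne : {w | ∃ T, IsSpanningTree T ∧ w = treeWeight x T}.Nonempty := ⟨_, T₀, hT₀, rfl⟩
  obtain ⟨T, hT, hw⟩ := hne.csInf_mem (finite_spanningTree_weights x)
  exact ⟨T, hT, hw.symm⟩

end Weight

section Reroute

variable {n : ℕ} {U : Finset (Sym2 (Fin n))} {v : Fin n}

lemma IsSpanningTree.exists_reroute (hU : IsSpanningTree U) {a b : Fin n} (he : s(a, b) ∈ U)
    (ha : a ≠ v) (hb : b ≠ v) :
    ∃ u, (u = a ∨ u = b) ∧ IsSpanningTree (insert s(u, v) (U.erase s(a, b))) ∧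
      s(u, v) ∉ U.erase s(a, b) := by
  have hv := (hU.connected.preconnected v a).deleteEdges_or b
  rw [← fromEdgeSet_coe_erase] at hv
  rcases hv with hva | hvb
  · refine ⟨b, Or.inr rfl, hU.exchange he (Sym2.mk_isDiag_iff.not.mpr hb) ?_⟩
    have hbv : (fromEdgeSet (↑(insert s(b, v) (U.erase s(a, b))) : Set (Sym2 (Fin n)))).Adj
        b v := by
      simp [hb]
    exact (hva.mono (fromEdgeSet_mono (coe_subset.mpr (subset_insert _ _)))).symm.trans
      hbv.reachable.symm
  · refine ⟨a, Or.inl rfl, hU.exchange he (Sym2.mk_isDiag_iff.not.mpr ha) ?_⟩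
    have hav : (fromEdgeSet (↑(insert s(a, v) (U.erase s(a, b))) : Set (Sym2 (Fin n)))).Adj
        a v := by
      simp [ha]
    exact hav.reachable.trans (hvb.mono (fromEdgeSet_mono (coe_subset.mpr (subset_insert _ _))))

/-- Each edge `s(a, b)` avoiding `v` with `c s(a, b) < w s(a, b)` is swapped for `s(a, v)` or
`s(b, v)`, whichever keeps the tree connected. -/
theorem IsSpanningTree.exists_sum_le_sum_reroute (w c : Sym2 (Fin n) → ℝ)
    (hc : ∀ a b, a ≠ v → b ≠ v → w s(a, v) ≤ c s(a, b)) (hU : IsSpanningTree U) :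
    ∃ W, IsSpanningTree W ∧
      ∑ e ∈ W, w e ≤ ∑ e ∈ U, if v ∈ e then w e else min (w e) (c e) := by
  obtain ⟨k, hk⟩ : ∃ k, #(U.filter fun e => v ∉ e ∧ c e < w e) = k := ⟨_, rfl⟩
  induction k using Nat.strong_induction_on generalizing U with
  | _ k ih =>
  by_cases hbad : ∃ e ∈ U, v ∉ e ∧ c e < w e
  swap
  · refine ⟨U, hU, sum_le_sum fun e he => ?_⟩
    split_ifs
    · exact le_rfl
    · exact le_min le_rfl (not_lt.mp fun h => hbad ⟨e, he, by assumption, h⟩)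
  obtain ⟨e, he, hve, hce⟩ := hbad
  induction e using Sym2.ind with
  | _ a b =>
  obtain ⟨ha, hb⟩ : a ≠ v ∧ b ≠ v := by
    rw [Sym2.mem_iff, not_or] at hve
    exact ⟨Ne.symm hve.1, Ne.symm hve.2⟩
  obtain ⟨u, hu, hU₂, hnew⟩ := hU.exists_reroute he ha hb
  have hcu : w s(u, v) ≤ c s(a, b) := by
    rcases hu with rfl | rfl
    · exact hc _ _ ha hb
    · rw [Sym2.eq_swap (a := a)]
      exact hc _ _ hb ha
  have hfewer : #((insert s(u, v) (U.erase s(a, b))).filter fun e => v ∉ e ∧ c e < w e) < k := by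
    rw [← hk, filter_insert, if_neg (by simp), filter_erase]
    exact card_erase_lt_of_mem (mem_filter.mpr ⟨he, hve, hce⟩)
  obtain ⟨W, hW, hle⟩ := ih _ hfewer hU₂ rfl
  refine ⟨W, hW, hle.trans ?_⟩
  rw [sum_insert hnew, ← add_sum_erase U _ he, if_pos (Sym2.mem_mk_right u v), if_neg hve,
    min_eq_right hce.le]
  linarith

end Reroute

section Pendant

variable {m : ℕ} {T : Finset (Sym2 (Fin m))}

lemma Sym2.map_castSucc_injective :
    Function.Injective (Sym2.map (Fin.castSucc : Fin m → Fin (m + 1))) :=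
  Sym2.map.injective (Fin.castSucc_injective m)

lemma last_notMem_of_mem_image_castSucc {e : Sym2 (Fin (m + 1))}
    (he : e ∈ T.image (Sym2.map Fin.castSucc)) : Fin.last m ∉ e := by
  obtain ⟨e, -, rfl⟩ := mem_image.mp he
  rw [Sym2.mem_map]
  rintro ⟨a, -, ha⟩
  exact (Fin.castSucc_lt_last a).ne ha

lemma star_notMem_image_castSucc (i : Fin m) :
    s(i.castSucc, Fin.last m) ∉ T.image (Sym2.map Fin.castSucc) :=
  fun h => last_notMem_of_mem_image_castSucc h (Sym2.mem_mk_right _ _)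

lemma IsSpanningTree.insert_star_image_castSucc (hT : IsSpanningTree T) (i : Fin m) :
    IsSpanningTree (insert s(i.castSucc, Fin.last m) (T.image (Sym2.map Fin.castSucc))) := by
  set U := insert s(i.castSucc, Fin.last m) (T.image (Sym2.map Fin.castSucc))
  have hd : ∀ e ∈ U, ¬ e.IsDiag := by
    simp only [U, mem_insert, mem_image, forall_eq_or_imp]
    refine ⟨Sym2.mk_isDiag_iff.not.mpr (Fin.castSucc_lt_last i).ne, ?_⟩
    rintro _ ⟨e, he, rfl⟩
    exact (Sym2.isDiag_map (Fin.castSucc_injective m)).not.mpr (hT.2 e he)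
  have hc : (fromEdgeSet (U : Set (Sym2 (Fin (m + 1))))).Connected := by
    refine (connected_iff_exists_forall_reachable _).mpr ⟨Fin.last m, fun u => ?_⟩
    induction u using Fin.lastCases with
    | last => exact .rfl
    | cast j =>
      have hli : (fromEdgeSet (U : Set (Sym2 (Fin (m + 1))))).Adj (Fin.last m) i.castSucc := by
        simp [U, (Fin.castSucc_lt_last i).ne']
      refine hli.reachable.trans ((hT.connected.preconnected i j).of_adj_reachable _
        fun a b hab => Adj.reachable ?_)
      rw [fromEdgeSet_adj] at hab ⊢
      exact ⟨mem_insert_of_mem (mem_image_of_mem _ hab.1), (Fin.castSucc_injective m).ne hab.2⟩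
  refine isSpanningTree_of_connected_of_card_le hd hc ?_
  rw [card_insert_of_notMem (star_notMem_image_castSucc i),
    card_image_of_injective _ Sym2.map_castSucc_injective, hT.card_add_one]

end Pendant

section StarMesh

variable {m : ℕ} (x : Fin (m + 1) → Fin (m + 1) → ℝ) (y : ℝ)

noncomputable def starMesh : Fin m → Fin m → ℝ :=
  fun i j => min (x i.castSucc j.castSucc)
    (x i.castSucc (Fin.last m) + x j.castSucc (Fin.last m) - y)

noncomputable def starCost : Sym2 (Fin (m + 1)) → ℝ :=
  Sym2.lift ⟨fun a b => x a (Fin.last m) + x b (Fin.last m) - y, fun a b => by ring⟩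

lemma starCost_mk (a b : Fin (m + 1)) :
    starCost x y s(a, b) = x a (Fin.last m) + x b (Fin.last m) - y :=
  rfl

lemma edgeWeight_castSucc_last (j : Fin m) :
    edgeWeight x s(j.castSucc, Fin.last m) = x j.castSucc (Fin.last m) :=
  edgeWeight_mk_of_lt x (Fin.castSucc_lt_last j)

lemma edgeWeight_starMesh {e : Sym2 (Fin m)} (he : ¬ e.IsDiag) :
    edgeWeight (starMesh x y) e =
      min (edgeWeight x (e.map Fin.castSucc)) (starCost x y (e.map Fin.castSucc)) := by
  induction e using Sym2.ind with
  | _ a b =>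
  wlog hab : a < b generalizing a b
  · rw [Sym2.eq_swap] at he ⊢
    exact this b a he (lt_of_le_of_ne (not_lt.mp hab) (fun h => he (Sym2.mk_isDiag_iff.mpr h)))
  rw [Sym2.map_mk, edgeWeight_mk_of_lt _ hab,
    edgeWeight_mk_of_lt _ (Fin.castSucc_lt_castSucc_iff.mpr hab), starCost_mk]
  rfl

end StarMesh

section Recursion

variable {m : ℕ} (x : Fin (m + 1) → Fin (m + 1) → ℝ) (y : ℝ) (i : Fin m)

lemma IsSpanningTree.exists_star_mem_sum_le
    (hi : ∀ j : Fin m, x i.castSucc (Fin.last m) ≤ x j.castSucc (Fin.last m))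
    {T : Finset (Sym2 (Fin (m + 1)))} (hT : IsSpanningTree T) :
    ∃ U, IsSpanningTree U ∧ s(i.castSucc, Fin.last m) ∈ U ∧
      ∑ e ∈ U, edgeWeight x e ≤ ∑ e ∈ T, edgeWeight x e := by
  by_cases hf : s(i.castSucc, Fin.last m) ∈ T
  · exact ⟨T, hT, hf, le_rfl⟩
  have hne : i.castSucc ≠ Fin.last m := (Fin.castSucc_lt_last i).ne
  obtain ⟨p⟩ := hT.connected.preconnected i.castSucc (Fin.last m)
  obtain ⟨w, hw, hiw⟩ := p.exists_adj_reachable_deleteEdges hne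
  rw [fromEdgeSet_adj] at hw
  obtain ⟨j, rfl⟩ := Fin.exists_castSucc_eq.mpr hw.2
  rw [← fromEdgeSet_coe_erase] at hiw
  have hil : (fromEdgeSet (↑(insert s(i.castSucc, Fin.last m) (T.erase s(j.castSucc, Fin.last m)))
      : Set (Sym2 (Fin (m + 1))))).Adj i.castSucc (Fin.last m) := by
    simp [hne]
  obtain ⟨hU, -⟩ := hT.exchange hw.1 (Sym2.mk_isDiag_iff.not.mpr hne)
    ((hiw.mono (fromEdgeSet_mono (coe_subset.mpr (subset_insert _ _)))).symm.trans hil.reachable)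
  refine ⟨_, hU, mem_insert_self _ _, ?_⟩
  rw [sum_insert (fun h => hf (mem_of_mem_erase h)), ← add_sum_erase T _ hw.1,
    edgeWeight_castSucc_last, edgeWeight_castSucc_last]
  linarith [hi j]

def collapseLast : Fin (m + 1) → Fin m :=
  Fin.lastCases i id

@[simp] lemma collapseLast_castSucc (j : Fin m) : collapseLast i j.castSucc = j := by
  simp [collapseLast]

@[simp] lemma collapseLast_last : collapseLast i (Fin.last m) = i := by
  simp [collapseLast]

lemma collapseLast_surjective : Function.Surjective (collapseLast i) :=
  fun j => ⟨j.castSucc, collapseLast_castSucc i j⟩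

lemma edgeWeight_starMesh_map_collapseLast_le (hy : x i.castSucc (Fin.last m) = y)
    {e : Sym2 (Fin (m + 1))} (he : ¬ e.IsDiag) (hei : e ≠ s(i.castSucc, Fin.last m)) :
    ¬ (e.map (collapseLast i)).IsDiag ∧
      edgeWeight (starMesh x y) (e.map (collapseLast i)) ≤ edgeWeight x e := by
  have star : ∀ j : Fin m, j ≠ i →
      ¬ (s(j.castSucc, Fin.last m).map (collapseLast i)).IsDiag ∧
      edgeWeight (starMesh x y) (s(j.castSucc, Fin.last m).map (collapseLast i)) ≤
        edgeWeight x s(j.castSucc, Fin.last m) := by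
    intro j hj
    have hd : ¬ (s(j, i)).IsDiag := Sym2.mk_isDiag_iff.not.mpr hj
    rw [Sym2.map_mk, collapseLast_castSucc, collapseLast_last, edgeWeight_starMesh x y hd,
      edgeWeight_castSucc_last, Sym2.map_mk, starCost_mk, hy]
    exact ⟨hd, (min_le_right _ _).trans_eq (by ring)⟩
  induction e using Sym2.ind with
  | _ a b =>
  induction a using Fin.lastCases with
  | last =>
    induction b using Fin.lastCases with
    | last => exact absurd (Sym2.mk_isDiag_iff.mpr rfl) he
    | cast b =>
      rw [Sym2.eq_swap]
      exact star b (by rintro rfl; exact hei Sym2.eq_swap)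
  | cast a =>
    induction b using Fin.lastCases with
    | last => exact star a (by rintro rfl; exact hei rfl)
    | cast b =>
      have hab : ¬ (s(a, b)).IsDiag := fun h => he (by simp_all [Sym2.mk_isDiag_iff])
      rw [Sym2.map_mk, collapseLast_castSucc, collapseLast_castSucc, edgeWeight_starMesh x y hab]
      exact ⟨hab, min_le_left _ _⟩

lemma IsSpanningTree.exists_add_sum_starMesh_le (hy : x i.castSucc (Fin.last m) = y)
    {U : Finset (Sym2 (Fin (m + 1)))} (hU : IsSpanningTree U)
    (hf : s(i.castSucc, Fin.last m) ∈ U) :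
    ∃ T, IsSpanningTree T ∧
      y + ∑ e ∈ T, edgeWeight (starMesh x y) e ≤ ∑ e ∈ U, edgeWeight x e := by
  set f := s(i.castSucc, Fin.last m)
  set T := (U.erase f).image (Sym2.map (collapseLast i))
  have hmap : ∀ e ∈ U.erase f, ¬ (e.map (collapseLast i)).IsDiag ∧
      edgeWeight (starMesh x y) (e.map (collapseLast i)) ≤ edgeWeight x e := fun e he =>
    edgeWeight_starMesh_map_collapseLast_le x y i hy (hU.2 e (mem_of_mem_erase he))
      (ne_of_mem_erase he)
  have hd : ∀ e ∈ T, ¬ e.IsDiag := by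
    simp only [T, mem_image]
    rintro _ ⟨e, he, rfl⟩
    exact (hmap e he).1
  have hc : (fromEdgeSet (T : Set (Sym2 (Fin m)))).Connected := by
    refine hU.connected.of_adj_reachable _ (collapseLast_surjective i) fun a b hab => ?_
    rw [fromEdgeSet_adj] at hab
    by_cases hbf : s(a, b) = f
    · rcases Sym2.eq_iff.mp hbf with ⟨rfl, rfl⟩ | ⟨rfl, rfl⟩ <;> simp
    · have hmem : s(a, b) ∈ U.erase f := mem_erase.mpr ⟨hbf, hab.1⟩
      refine Adj.reachable ((fromEdgeSet_adj _).mpr ⟨mem_image_of_mem _ hmem, ?_⟩)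
      exact Sym2.mk_isDiag_iff.not.mp (hmap _ hmem).1
  have hcard : #(U.erase f) + 1 = m := by
    have := hU.card_add_one
    have := card_erase_of_mem hf
    have := card_pos.mpr ⟨f, hf⟩
    omega
  have hle : #T ≤ #(U.erase f) := card_image_le (s := U.erase f) (f := Sym2.map (collapseLast i))
  have hT := isSpanningTree_of_connected_of_card_le hd hc (by omega)
  have hinj : Set.InjOn (Sym2.map (collapseLast i)) (U.erase f) :=
    card_image_iff.mp (show #T = #(U.erase f) by have := hT.card_add_one; omega)
  refine ⟨T, hT, ?_⟩
  rw [sum_image hinj, ← add_sum_erase U _ hf, edgeWeight_castSucc_last, hy]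
  gcongr with e he
  exact (hmap e he).2

lemma IsSpanningTree.exists_sum_le_add_sum_starMesh (hy : x i.castSucc (Fin.last m) = y)
    (hmin : ∀ j : Fin m, y ≤ x j.castSucc (Fin.last m))
    {T : Finset (Sym2 (Fin m))} (hT : IsSpanningTree T) :
    ∃ W, IsSpanningTree W ∧
      ∑ e ∈ W, edgeWeight x e ≤ y + ∑ e ∈ T, edgeWeight (starMesh x y) e := by
  have hcost : ∀ a b, a ≠ Fin.last m → b ≠ Fin.last m →
      edgeWeight x s(a, Fin.last m) ≤ starCost x y s(a, b) := by
    intro a b ha hb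
    obtain ⟨a, rfl⟩ := Fin.exists_castSucc_eq.mpr ha
    obtain ⟨b, rfl⟩ := Fin.exists_castSucc_eq.mpr hb
    rw [edgeWeight_castSucc_last, starCost_mk]
    linarith [hmin b]
  obtain ⟨W, hW, hle⟩ := (hT.insert_star_image_castSucc i).exists_sum_le_sum_reroute _ _ hcost
  refine ⟨W, hW, hle.trans_eq ?_⟩
  rw [sum_insert (star_notMem_image_castSucc i), if_pos (Sym2.mem_mk_right _ _),
    edgeWeight_castSucc_last, hy, sum_image fun a _ b _ h => Sym2.map_castSucc_injective h]
  refine congrArg _ (sum_congr rfl fun e he => ?_)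
  rw [if_neg (last_notMem_of_mem_image_castSucc (mem_image_of_mem _ he)),
    edgeWeight_starMesh x y (hT.2 e he)]

theorem mstValue_succ_eq_add_mstValue_starMesh (hy : x i.castSucc (Fin.last m) = y)
    (hmin : ∀ j : Fin m, y ≤ x j.castSucc (Fin.last m)) :
    mstValue (m + 1) x = y + mstValue m (starMesh x y) := by
  refine le_antisymm ?_ ?_
  · obtain ⟨T, hT, hTw⟩ := exists_isSpanningTree_treeWeight_eq_mstValue i.pos (starMesh x y)
    obtain ⟨W, hW, hWT⟩ := hT.exists_sum_le_add_sum_starMesh x y i hy hmin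
    calc mstValue (m + 1) x ≤ treeWeight x W := mstValue_le x hW
      _ = ∑ e ∈ W, edgeWeight x e := treeWeight_eq_sum_edgeWeight x hW.2
      _ ≤ y + ∑ e ∈ T, edgeWeight (starMesh x y) e := hWT
      _ = y + mstValue m (starMesh x y) := by rw [← hTw, treeWeight_eq_sum_edgeWeight _ hT.2]
  · obtain ⟨W, hW, hWw⟩ := exists_isSpanningTree_treeWeight_eq_mstValue m.succ_pos x
    obtain ⟨U, hU, hfU, hUW⟩ := hW.exists_star_mem_sum_le x i fun j => hy ▸ hmin j
    obtain ⟨T, hT, hTU⟩ := hU.exists_add_sum_starMesh_le x y i hy hfU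
    calc y + mstValue m (starMesh x y) ≤ y + treeWeight (starMesh x y) T := by
          grw [mstValue_le _ hT]
      _ = y + ∑ e ∈ T, edgeWeight (starMesh x y) e := by
          rw [treeWeight_eq_sum_edgeWeight _ hT.2]
      _ ≤ ∑ e ∈ U, edgeWeight x e := hTU
      _ ≤ ∑ e ∈ W, edgeWeight x e := hUW
      _ = mstValue (m + 1) x := by rw [← hWw, treeWeight_eq_sum_edgeWeight _ hW.2]

end Recursion

/-- The star-mesh recursion for minimum spanning trees (Algorithm 2 of the paper):
with `yₙ = min_{i ∈ [n-1]} x(i,n)` and `x'(i,j) = min (x(i,j), x(i,n)+x(j,n)-yₙ)`,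
the MST value of `Kₙ` equals `yₙ` plus the MST value of `Kₙ₋₁` with weights `x'`. -/
theorem mst_star_mesh_recursion (n : ℕ) (hn : 3 ≤ n) (x : Fin n → Fin n → ℝ) :
    let last : Fin n := ⟨n - 1, by omega⟩
    let emb : Fin (n - 1) → Fin n := Fin.castLE (Nat.sub_le n 1)
    let y : ℝ := Finset.univ.inf' ⟨⟨0, by omega⟩, Finset.mem_univ _⟩
      (fun i : Fin (n - 1) => x (emb i) last)
    let x' : Fin (n - 1) → Fin (n - 1) → ℝ :=
      fun i j => min (x (emb i) (emb j)) (x (emb i) last + x (emb j) last - y)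
    mstValue n x = y + mstValue (n - 1) x' := by
  intro last emb y x'
  obtain ⟨m, rfl⟩ : ∃ m, n = m + 1 := ⟨n - 1, by omega⟩
  obtain ⟨i, -, hi⟩ := exists_mem_eq_inf' ⟨⟨0, by omega⟩, mem_univ _⟩
    (fun i : Fin m => x i.castSucc (Fin.last m))
  exact mstValue_succ_eq_add_mstValue_starMesh x y i hi.symm fun j => inf'_le _ (mem_univ j)
end

section
/- Let G* = (V, E*) be a directed graph with distinguished vertices s, t such that dist_{G*}(s,t) = k, let E*_k be the set of arcs lying on some s-t-path of length exactly k in G*, and let G' be obtained from G* by adding the reverse arcs of all arcs in E*_k. Then every shortest s-t-path in G' uses only arcs of E*, and consequently dist_{G'}(s,t) = k. -/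
/-!
An arc `(a, b)` on a shortest `s`-`t`-path of `G*` joins the layers `l` and `l + 1` of the
breadth-first layering from `s`, so its reversal steps back a layer. Hence an `s`-`v`-walk
in `G'` is never shorter than `dist_{G*}(s, v)`, and a shortest `s`-`t`-walk of `G'` through a
reversed arc could be shortcut: jump directly to the layer of the arc's head and continue.
-/

/-- `f` is a directed walk of length `k` in the digraph with arc relation `A`. -/
def IsWalk {V : Type*} (A : V → V → Prop) (k : ℕ) (f : Fin (k + 1) → V) : Prop :=
  ∀ i : Fin k, A (f i.castSucc) (f i.succ)

/-- There is a directed walk of length exactly `k` from `u` to `v`. -/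
def WalkLen {V : Type*} (A : V → V → Prop) (k : ℕ) (u v : V) : Prop :=
  ∃ f : Fin (k + 1) → V, IsWalk A k f ∧ f 0 = u ∧ f (Fin.last k) = v

/-- The arc `(a, b)` lies on some `s`-`t`-path of length exactly `k`. -/
def OnPath {V : Type*} (A : V → V → Prop) (k : ℕ) (s t a b : V) : Prop :=
  ∃ f : Fin (k + 1) → V, IsWalk A k f ∧ f 0 = s ∧ f (Fin.last k) = t ∧
    ∃ i : Fin k, f i.castSucc = a ∧ f i.succ = b

section Walks

variable {V : Type*} {A B : V → V → Prop} {m n k : ℕ} {s t u v w x y : V}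

theorem walkLen_zero_iff : WalkLen A 0 u v ↔ u = v := by
  constructor
  · rintro ⟨f, -, rfl, rfl⟩
    rfl
  · rintro rfl
    exact ⟨fun _ => u, fun i => i.elim0, rfl, rfl⟩

theorem walkLen_succ_iff : WalkLen A (n + 1) u w ↔ ∃ v, WalkLen A n u v ∧ A v w := by
  constructor
  · rintro ⟨f, hf, rfl, rfl⟩
    exact ⟨f (Fin.last n).castSucc, ⟨fun i => f i.castSucc, fun i => hf i.castSucc, rfl, rfl⟩,
      hf (Fin.last n)⟩
  · rintro ⟨v, ⟨f, hf, rfl, rfl⟩, hvw⟩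
    refine ⟨Fin.snoc f w, fun i => ?_, by simp, by simp⟩
    induction i using Fin.lastCases with
    | last => simpa using hvw
    | cast i =>
      rw [Fin.succ_castSucc, Fin.snoc_castSucc, Fin.snoc_castSucc]
      exact hf i

theorem WalkLen.snoc (h : WalkLen A n u v) (hvw : A v w) : WalkLen A (n + 1) u w :=
  walkLen_succ_iff.2 ⟨v, h, hvw⟩

theorem WalkLen.append (huv : WalkLen A m u v) (hvw : WalkLen A n v w) :
    WalkLen A (m + n) u w := by
  induction n generalizing w with
  | zero => exact walkLen_zero_iff.1 hvw ▸ huv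
  | succ n ih =>
    obtain ⟨x, hvx, hxw⟩ := walkLen_succ_iff.1 hvw
    exact (ih hvx).snoc hxw

theorem WalkLen.mono (hAB : ∀ a b, A a b → B a b) (h : WalkLen A n u v) : WalkLen B n u v :=
  let ⟨f, hf, hf0, hfn⟩ := h
  ⟨f, fun i => hAB _ _ (hf i), hf0, hfn⟩

theorem IsWalk.walkLen {f : Fin (k + 1) → V} (hf : IsWalk A k f) (p q : Fin (k + 1)) (n : ℕ)
    (hpq : (p : ℕ) + n = q) : WalkLen A n (f p) (f q) := by
  refine ⟨fun r => f ⟨p + r, by omega⟩, fun r => ?_, ?_, ?_⟩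
  · convert hf ⟨p + r, by omega⟩ using 2 <;> ext <;> simp [add_assoc]
  · simp
  · exact congrArg f (Fin.ext (by simp [hpq]))

theorem OnPath.exists_walkLen (h : OnPath A k s t x y) :
    ∃ l < k, WalkLen A l s x ∧ WalkLen A (k - (l + 1)) y t := by
  obtain ⟨f, hf, rfl, rfl, i, rfl, rfl⟩ := h
  exact ⟨i, i.isLt, hf.walkLen 0 i.castSucc i (by simp),
    hf.walkLen i.succ (Fin.last k) (k - (i + 1)) (by simp)⟩

end Walks

section Augmentation

variable {V : Type*} {A A' : V → V → Prop} {k m j : ℕ} {s t v x y : V}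

theorem OnPath.exists_walkLen_lt (hkmin : ∀ j < k, ¬ WalkLen A j s t)
    (hyx : OnPath A k s t y x) (hx : WalkLen A m s x) : ∃ l < m, WalkLen A l s y := by
  obtain ⟨l, hlk, hsy, hxt⟩ := hyx.exists_walkLen
  refine ⟨l, ?_, hsy⟩
  by_contra! hml
  exact hkmin _ (by omega) (hx.append hxt)

theorem WalkLen.exists_le_of_augment (hkmin : ∀ j < k, ¬ WalkLen A j s t)
    (hA' : ∀ a b, A' a b → A a b ∨ OnPath A k s t b a) (h : WalkLen A' j s v) :
    ∃ m ≤ j, WalkLen A m s v := by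
  induction j generalizing v with
  | zero => exact ⟨0, le_rfl, walkLen_zero_iff.1 h ▸ walkLen_zero_iff.2 rfl⟩
  | succ j ih =>
    obtain ⟨x, hx, hxv⟩ := walkLen_succ_iff.1 h
    obtain ⟨m, hmj, hm⟩ := ih hx
    rcases hA' x v hxv with hxv | hvx
    · exact ⟨m + 1, by omega, hm.snoc hxv⟩
    · obtain ⟨l, hlm, hl⟩ := hvx.exists_walkLen_lt hkmin hm
      exact ⟨l, by omega, hl⟩

end Augmentation

/-- Let `dist_{G*}(s,t) = k`, let `E*ₖ` be the arcs on `s`-`t`-paths of length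
exactly `k`, and let `G'` be obtained from `G*` by adding the reverse arcs of all
arcs of `E*ₖ`. Then every shortest `s`-`t`-path in `G'` uses only arcs of `G*`,
and consequently `dist_{G'}(s,t) = k`. -/
theorem shortest_paths_avoid_added_reverse_arcs {V : Type*} (A : V → V → Prop)
    (s t : V) (k : ℕ)
    (hk : WalkLen A k s t) (hkmin : ∀ j < k, ¬ WalkLen A j s t)
    (A' : V → V → Prop) (hA' : ∀ a b, A' a b ↔ A a b ∨ OnPath A k s t b a) :
    (∀ (j : ℕ) (f : Fin (j + 1) → V), IsWalk A' j f → f 0 = s → f (Fin.last j) = t →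
      (∀ j' < j, ¬ WalkLen A' j' s t) → ∀ i : Fin j, A (f i.castSucc) (f i.succ)) ∧
    (WalkLen A' k s t ∧ ∀ j < k, ¬ WalkLen A' j s t) := by
  have hAA' : ∀ a b, A a b → A' a b := fun a b h => (hA' a b).2 (.inl h)
  have hA'cases : ∀ a b, A' a b → A a b ∨ OnPath A k s t b a := fun a b => (hA' a b).1
  refine ⟨fun j f hf hf0 hfj hjmin i => ?_, hk.mono hAA', fun j hjk hj => ?_⟩
  · refine (hA'cases _ _ (hf i)).resolve_right fun hrev => ?_
    have hprefix := hf.walkLen 0 i.castSucc i (by simp)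
    have hsuffix := hf.walkLen i.succ (Fin.last j) (j - (i + 1)) (by simp)
    rw [hf0] at hprefix
    rw [hfj] at hsuffix
    obtain ⟨m, hmi, hm⟩ := hprefix.exists_le_of_augment hkmin hA'cases
    obtain ⟨l, hlm, hl⟩ := hrev.exists_walkLen_lt hkmin hm
    exact hjmin _ (by omega) ((hl.mono hAA').append hsuffix)
  · obtain ⟨m, hmj, hm⟩ := hj.exists_le_of_augment hkmin hA'cases
    exact hkmin m (by omega) hm
end

section
/- Let P be a directed v*-t-path in G* of length i* on which every arc has residual capacity at least c_min, and suppose the pushing procedure routes flow so that z(e) ≥ c_min for every arc e of P before the clean-up, and the clean-up only reduces flow on arcs whose head is at distance more than i* from t. Then after the clean-up, z(e) ≥ c_min for all e ∈ P; in particular an arc e ∈ P with c(e) = c_min is saturated. -/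
/-! If the clean-up lowered the flow on an arc of `P`, the head of that arc would be joined to `t`
by the remainder of `P`, a walk in `G*` of length at most `i*`; but the clean-up only touches arcs
whose head is farther than `i*` from `t`. So `z' = z ≥ c_min` on `P`, and `z' ≤ c` turns this into
saturation wherever `c = c_min`. -/

theorem IsWalk.walkLen_drop {V : Type*} {A : V → V → Prop} {k : ℕ} {f : Fin (k + 1) → V}
    (hf : IsWalk A k f) (i : Fin (k + 1)) : WalkLen A (k - i) (f i) (f (Fin.last k)) :=
  ⟨fun j => f ⟨i + j, by omega⟩, fun j => hf ⟨i + j, by omega⟩, rfl,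
    congrArg f (Fin.ext (Nat.add_sub_cancel' i.is_le))⟩

theorem cleanup_preserves_path_flow_general {V : Type*} (c : V → V → ℝ) (t : V)
    (cmin : ℝ) (hcmin : 0 < cmin)
    (istar : ℕ) (f : Fin (istar + 1) → V)
    (hflast : f (Fin.last istar) = t)
    (hcap : ∀ e : Fin istar, cmin ≤ c (f e.castSucc) (f e.succ))
    (z z' : V → V → ℝ)
    (hz : ∀ e : Fin istar, cmin ≤ z (f e.castSucc) (f e.succ))
    (hz'c : ∀ u v : V, z' u v ≤ c u v)
    (hfar : ∀ u v : V, z' u v < z u v →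
      ∀ j : ℕ, j ≤ istar → ¬ WalkLen (fun a b => 0 < c a b) j v t) :
    (∀ e : Fin istar, cmin ≤ z' (f e.castSucc) (f e.succ)) ∧
    (∀ e : Fin istar, c (f e.castSucc) (f e.succ) = cmin →
      z' (f e.castSucc) (f e.succ) = c (f e.castSucc) (f e.succ)) := by
  have hwalk : IsWalk (fun a b => 0 < c a b) istar f := fun e => hcmin.trans_le (hcap e)
  have hkept : ∀ e : Fin istar, cmin ≤ z' (f e.castSucc) (f e.succ) := by
    intro e
    by_contra! hlow
    refine hfar _ _ (hlow.trans_le (hz e)) (istar - e.succ) (Nat.sub_le _ _) ?_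
    simpa only [hflast] using hwalk.walkLen_drop e.succ
  exact ⟨hkept, fun e he => le_antisymm (hz'c _ _) (he ▸ hkept e)⟩

/-- Claim 10 of the paper: let `P` (given by `f`) be a directed `v*`-`t`-path of
length `i*` in the residual network `G* = {e : 0 < c e}` whose arcs all have
residual capacity at least `c_min > 0`, suppose the pushing procedure produced
flow values `z` with `z e ≥ c_min` on all arcs of `P`, and suppose the clean-up
only reduces flow on arcs whose head is at distance more than `i*` from `t`,
yielding `z' ≤ z` with `z' ≤ c`. Then after the clean-up `z' e ≥ c_min` on all
arcs of `P`; in particular any arc `e ∈ P` with `c e = c_min` is saturated. -/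
theorem cleanup_preserves_path_flow {V : Type*} (c : V → V → ℝ) (t vstar : V)
    (cmin : ℝ) (hcmin : 0 < cmin)
    (istar : ℕ) (f : Fin (istar + 1) → V) (hinj : Function.Injective f)
    (hf0 : f 0 = vstar) (hflast : f (Fin.last istar) = t)
    (hcap : ∀ e : Fin istar, cmin ≤ c (f e.castSucc) (f e.succ))
    (z z' : V → V → ℝ)
    (hz : ∀ e : Fin istar, cmin ≤ z (f e.castSucc) (f e.succ))
    (hreduce : ∀ u v : V, z' u v ≤ z u v)
    (hz'c : ∀ u v : V, z' u v ≤ c u v)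
    (hfar : ∀ u v : V, z' u v < z u v →
      ∀ j : ℕ, j ≤ istar → ¬ WalkLen (fun a b => 0 < c a b) j v t) :
    (∀ e : Fin istar, cmin ≤ z' (f e.castSucc) (f e.succ)) ∧
    (∀ e : Fin istar, c (f e.castSucc) (f e.succ) = cmin →
      z' (f e.castSucc) (f e.succ) = c (f e.castSucc) (f e.succ)) :=
  cleanup_preserves_path_flow_general c t cmin hcmin istar f hflast hcap z z' hz hz'c hfar
end
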